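/- arXiv:math/0609322 — 5 statements merged into one kernel-verified Lean document; each statement's English description precedes it below -/
import Mathlib

section
/- For any real number α and any real number N ≥ 12, there exist integers a₁, a₂ and integers q₁, q₂ with 1 ≤ q₁, q₂ ≤ N such that |α - a₁/q₁ - a₂/q₂| ≤ 48/N². -/
theorem stmt_2 (α N : ℝ) (hN : 12 ≤ N) :
    ∃ (a₁ a₂ q₁ q₂ : ℤ), 1 ≤ q₁ ∧ (q₁ : ℝ) ≤ N ∧ 1 ≤ q₂ ∧ (q₂ : ℝ) ≤ N ∧
      |α - (a₁ : ℝ) / q₁ - a₂ / q₂| ≤ 48 / N ^ 2 := by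
  set q : ℤ := ⌊N⌋ with hq
  have hq12 : (12:ℤ) ≤ q := Int.le_floor.2 (by exact_mod_cast hN)
  have hqN : (q:ℝ) ≤ N := Int.floor_le N
  have hNq : N - 1 ≤ (q:ℝ) := by
    have := Int.sub_one_lt_floor N; linarith
  set D : ℤ := q * (q - 1) with hD
  have hDpos : (0:ℤ) < D := by simp only [hD]; nlinarith
  set k : ℤ := round (α * D) with hk
  refine ⟨-k, k, q, q - 1, by linarith, hqN, by linarith, by push_cast; linarith, ?_⟩
  have hDR : (0:ℝ) < (D:ℝ) := by exact_mod_cast hDpos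
  have hqR : (12:ℝ) ≤ (q:ℝ) := by exact_mod_cast hq12
  have hDcast : ((D:ℤ):ℝ) = (q:ℝ) * ((q:ℝ) - 1) := by rw [hD]; push_cast; ring
  have h1 : |α * D - k| ≤ 1/2 := abs_sub_round _
  have heq : α - ((-k : ℤ):ℝ)/(q:ℝ) - (k:ℝ)/((q - 1 : ℤ):ℝ) = (α * D - k)/D := by
    have hq0 : ((q:ℝ)) ≠ 0 := by linarith
    have hq10 : ((q:ℝ) - 1) ≠ 0 := by linarith
    rw [hDcast]
    push_cast
    field_simp
    ring
  rw [heq, abs_div, abs_of_pos hDR]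
  rw [div_le_div_iff₀ hDR (by positivity)]
  have hcalc : N ^ 2 ≤ 96 * (D:ℝ) := by
    rw [hDcast]
    nlinarith
  nlinarith [abs_nonneg (α * D - k)]
end

section
/- Let 1/2 < θ ≤ 1 and suppose there is a constant C such that for every positive integer q, every integer c coprime to q, and every real N ≥ q^θ, the congruence x·y ≡ c (mod q) has a solution with C·N ≤ x, y ≤ 2·C·N and gcd(x,y) = 1. Then for every real α, every N ≥ 1, and every rational approximation |α - a/q| ≤ 1/(q·N^{1/θ}) with gcd(a,q) = 1 and N < q ≤ N^{1/θ}, there exist integers a₁, a₂ and integers q₁, q₂ with C·N ≤ q₁, q₂ ≤ 2·C·N such that |α - a₁/q₁ - a₂/q₂| ≤ (1 + 1/C²)/(q·N^{1/θ}). -/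
/-!
Let `ā` be an inverse of `a` modulo `q` and take coprime `x, y` with `x y ≡ ā (mod q)` in the box
`[C N, 2 C N]`. Then `a x y = 1 + q k`, and a Bézout relation `s x + t y = 1` splits `k / (x y)` as
`k t / x + k s / y`, so `a / q` differs from a sum of two fractions with denominators `x` and `y` by
exactly `1 / (q x y) ≤ 1 / (C² q N²) ≤ 1 / (C² q N^{1/θ})`.
-/

lemma IsCoprime.exists_isCoprime_mul_modEq_one {a n : ℤ} (h : IsCoprime a n) :
    ∃ u, IsCoprime u n ∧ a * u ≡ 1 [ZMOD n] := by
  obtain ⟨u, v, huv⟩ := h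
  exact ⟨u, ⟨a, v, by linear_combination huv⟩,
    Int.modEq_iff_dvd.mpr ⟨v, by linear_combination -huv⟩⟩

lemma exists_div_sub_div_sub_div_eq_one_div {K : Type*} [Field K] [CharZero K] {a q x y : ℤ}
    (hq : q ≠ 0) (hx : x ≠ 0) (hy : y ≠ 0) (hxy : IsCoprime x y)
    (h : a * (x * y) ≡ 1 [ZMOD q]) :
    ∃ a₁ a₂ : ℤ, (a : K) / q - a₁ / x - a₂ / y = 1 / (q * x * y) := by
  obtain ⟨k, hk⟩ := h.symm.dvd
  obtain ⟨s, t, hst⟩ := hxy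
  refine ⟨k * t, k * s, ?_⟩
  have hk' : (a : K) * (x * y) - 1 = q * k := by exact_mod_cast hk
  have hst' : (s : K) * x + t * y = 1 := by exact_mod_cast hst
  push_cast
  field_simp
  linear_combination hk' - (q : K) * k * hst'

lemma Real.rpow_one_div_le_sq {N θ : ℝ} (hN : 1 ≤ N) (hθ : 1 / 2 < θ) :
    N ^ (1 / θ) ≤ N ^ 2 := by
  have hθ2 : 1 / θ ≤ 2 := by
    rw [div_le_iff₀ (by linarith)]
    linarith
  simpa using Real.rpow_le_rpow_of_exponent_le hN hθ2

theorem stmt_4_general (θ : ℝ) (hθ1 : 1 / 2 < θ) (C : ℝ) (hC : 0 < C)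
    (H : ∀ q : ℕ, 0 < q → ∀ c : ℤ, IsCoprime c (q : ℤ) → ∀ N : ℝ, (q : ℝ) ^ θ ≤ N →
      ∃ x y : ℤ, C * N ≤ (x : ℝ) ∧ (x : ℝ) ≤ 2 * C * N ∧ C * N ≤ (y : ℝ) ∧
        (y : ℝ) ≤ 2 * C * N ∧ IsCoprime x y ∧ x * y ≡ c [ZMOD (q : ℤ)]) :
    ∀ α : ℝ, ∀ N : ℝ, 1 ≤ N → ∀ a : ℤ, ∀ q : ℕ, 0 < q → IsCoprime a (q : ℤ) →
    (N : ℝ) < q → (q : ℝ) ≤ N ^ (1 / θ) → |α - (a : ℝ) / q| ≤ 1 / (q * N ^ (1 / θ)) →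
    ∃ (a₁ a₂ q₁ q₂ : ℤ), C * N ≤ (q₁ : ℝ) ∧ (q₁ : ℝ) ≤ 2 * C * N ∧
      C * N ≤ (q₂ : ℝ) ∧ (q₂ : ℝ) ≤ 2 * C * N ∧
      |α - (a₁ : ℝ) / q₁ - a₂ / q₂| ≤ (1 + 1 / C ^ 2) / (q * N ^ (1 / θ)) := by
  intro α N hN a q hq ha _ hqN happ
  have hθ : 0 < θ := by linarith
  have hCN : 0 < C * N := by positivity
  have hqθ : (q : ℝ) ^ θ ≤ N := by
    rwa [one_div, Real.le_rpow_inv_iff_of_pos (by positivity) (by positivity) hθ] at hqN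
  obtain ⟨u, hu, hau⟩ := ha.exists_isCoprime_mul_modEq_one
  obtain ⟨x, y, hx, hx', hy, hy', hxy, hxyu⟩ := H q hq u hu N hqθ
  have hx0 : (0 : ℝ) < x := hCN.trans_le hx
  have hy0 : (0 : ℝ) < y := hCN.trans_le hy
  obtain ⟨a₁, a₂, hsplit⟩ := exists_div_sub_div_sub_div_eq_one_div (K := ℝ) (by positivity)
    (by exact_mod_cast hx0.ne') (by exact_mod_cast hy0.ne') hxy
    ((hxyu.mul_left a).trans hau)
  push_cast at hsplit
  refine ⟨a₁, a₂, x, y, hx, hx', hy, hy', ?_⟩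
  have hxy_ge : C ^ 2 * N ^ (1 / θ) ≤ x * y := calc
    C ^ 2 * N ^ (1 / θ) ≤ C ^ 2 * N ^ 2 := by gcongr; exact Real.rpow_one_div_le_sq hN hθ1
    _ = (C * N) * (C * N) := by ring
    _ ≤ x * y := mul_le_mul hx hy hCN.le hx0.le
  calc |α - (a₁ : ℝ) / x - a₂ / y| = |(α - a / q) + 1 / (q * (x * y))| := by
        rw [← mul_assoc, ← hsplit]; congr 1; ring
    _ ≤ |α - a / q| + |(1 : ℝ) / (q * (x * y))| := abs_add_le _ _
    _ = |α - a / q| + 1 / (q * (x * y)) := by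
        rw [abs_of_pos (one_div_pos.mpr (mul_pos (by positivity) (mul_pos hx0 hy0)))]
    _ ≤ 1 / (q * N ^ (1 / θ)) + 1 / (q * (C ^ 2 * N ^ (1 / θ))) := by
        gcongr ?_ + 1 / (_ * ?_)
    _ = (1 + 1 / C ^ 2) / (q * N ^ (1 / θ)) := by
        field_simp

theorem stmt_4 (θ : ℝ) (hθ1 : 1 / 2 < θ) (hθ2 : θ ≤ 1) (C : ℝ) (hC : 0 < C)
    (H : ∀ q : ℕ, 0 < q → ∀ c : ℤ, IsCoprime c (q : ℤ) → ∀ N : ℝ, (q : ℝ) ^ θ ≤ N →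
      ∃ x y : ℤ, C * N ≤ (x : ℝ) ∧ (x : ℝ) ≤ 2 * C * N ∧ C * N ≤ (y : ℝ) ∧
        (y : ℝ) ≤ 2 * C * N ∧ IsCoprime x y ∧ x * y ≡ c [ZMOD (q : ℤ)]) :
    ∀ α : ℝ, ∀ N : ℝ, 1 ≤ N → ∀ a : ℤ, ∀ q : ℕ, 0 < q → IsCoprime a (q : ℤ) →
    (N : ℝ) < q → (q : ℝ) ≤ N ^ (1 / θ) → |α - (a : ℝ) / q| ≤ 1 / (q * N ^ (1 / θ)) →
    ∃ (a₁ a₂ q₁ q₂ : ℤ), C * N ≤ (q₁ : ℝ) ∧ (q₁ : ℝ) ≤ 2 * C * N ∧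
      C * N ≤ (q₂ : ℝ) ∧ (q₂ : ℝ) ≤ 2 * C * N ∧
      |α - (a₁ : ℝ) / q₁ - a₂ / q₂| ≤ (1 + 1 / C ^ 2) / (q * N ^ (1 / θ)) :=
  stmt_4_general θ hθ1 C hC H
end

section
/- Let L and J be positive integers, and let x₁, ..., x_J be real numbers such that ‖x_j‖ ≥ 1/L for each j = 1, ..., J, where ‖x‖ denotes the distance from x to the nearest integer. Then ∑_{l=1}^{L} |∑_{j=1}^{J} e(l·x_j)| > J/6, where e(x) = e^{2πix}. -/
open Complex Real Finset


noncomputable def PhiET (Lr K m : ℝ) : ℝ :=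
  (4*m - 10*m^3 + 6*m^5 - 15*K*m^2 + 15*K*m^4 - 10*K^2*m + 10*K^2*m^3
   + 10*Lr*m + 15*Lr*m^2 - 10*Lr*m^3 - 15*Lr*m^4 + 15*Lr*K*m - 15*Lr*K*m^2 - 30*Lr*K*m^3
   - 15*Lr*K^2*m - 15*Lr*K^2*m^2 + 5*Lr^2*m + 15*Lr^2*m^2 + 10*Lr^2*m^3
   + 15*Lr^2*K*m + 15*Lr^2*K*m^2) / 30

noncomputable def uET (L : ℕ) (r : ℕ) : ℝ := ((r:ℝ)+1) * ((L:ℝ) - (r:ℝ))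

noncomputable def NET (L : ℕ) (k : ℤ) : ℝ :=
  ∑ r ∈ range L, ∑ s ∈ range L, if (r:ℤ) - (s:ℤ) = k then uET L r * uET L s else 0

lemma sum_q (Lr K : ℝ) (m : ℕ) :
    ∑ s ∈ range m, ((s:ℝ)+K+1)*(Lr-(s:ℝ)-K)*(((s:ℝ)+1)*(Lr-(s:ℝ))) = PhiET Lr K m := by
  induction m with
  | zero => simp [PhiET]
  | succ m ih => rw [Finset.sum_range_succ, ih]; simp only [PhiET]; push_cast; ring

lemma NET_neg (L : ℕ) (k : ℤ) : NET L (-k) = NET L k := by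
  unfold NET
  rw [Finset.sum_comm]
  refine Finset.sum_congr rfl fun a _ => Finset.sum_congr rfl fun b _ => ?_
  by_cases hab : (a:ℤ) - b = k
  · rw [if_pos (by omega), if_pos hab, mul_comm]
  · rw [if_neg (by omega), if_neg hab]

lemma NET_eq_zero (L : ℕ) (k : ℤ) (hk : (L:ℤ) ≤ |k|) : NET L k = 0 := by
  unfold NET
  refine Finset.sum_eq_zero fun r hr => Finset.sum_eq_zero fun s hs => ?_
  rw [Finset.mem_range] at hr hs
  rcases abs_cases k with ⟨he,_⟩|⟨he,_⟩ <;> rw [if_neg (by omega)]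

lemma NET_formula (L : ℕ) (k : ℤ) (h0 : 0 ≤ k) (hk : k ≤ (L:ℤ)) :
    NET L k = PhiET (L:ℝ) (k:ℝ) ((L:ℝ) - (k:ℝ)) := by
  obtain ⟨kn, rfl⟩ := Int.eq_ofNat_of_zero_le h0
  have hkn : kn ≤ L := by exact_mod_cast hk
  unfold NET
  rw [Finset.sum_comm]
  have h1 : ∀ s ∈ range L,
      (∑ r ∈ range L, if (r:ℤ) - (s:ℤ) = (kn:ℤ) then uET L r * uET L s else 0)
      = if s ∈ range (L - kn) then uET L (s + kn) * uET L s else 0 := by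
    intro s _
    have : ∀ r ∈ range L, (if (r:ℤ) - (s:ℤ) = (kn:ℤ) then uET L r * uET L s else 0)
        = if r = s + kn then uET L r * uET L s else 0 := by
      intro r _
      by_cases hr : r = s + kn
      · rw [if_pos (by omega), if_pos hr]
      · rw [if_neg (by omega), if_neg hr]
    rw [Finset.sum_congr rfl this, Finset.sum_ite_eq' (range L) (s + kn)]
    by_cases hs : s + kn ∈ range L
    · rw [if_pos hs, if_pos (by rw [Finset.mem_range] at hs ⊢; omega)]
    · rw [if_neg hs, if_neg (by rw [Finset.mem_range] at hs ⊢; omega)]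
  rw [Finset.sum_congr rfl h1, Finset.sum_ite_mem,
    Finset.inter_eq_right.mpr (by intro a ha; rw [Finset.mem_range] at ha ⊢; omega)]
  have h2 : ∀ s ∈ range (L - kn), uET L (s + kn) * uET L s
      = ((s:ℝ)+(kn:ℝ)+1)*((L:ℝ)-(s:ℝ)-(kn:ℝ))*(((s:ℝ)+1)*((L:ℝ)-(s:ℝ))) := by
    intro s _
    unfold uET
    push_cast
    ring
  rw [Finset.sum_congr rfl h2, sum_q]
  congr 1
  push_cast [Nat.cast_sub hkn]
  ring

lemma NET_def (L : ℕ) (k : ℤ) : NET L k =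
  ∑ r ∈ range L, ∑ s ∈ range L, if (r:ℤ) - (s:ℤ) = k then uET L r * uET L s else 0 := rfl

lemma NET_eq_zero' (L : ℕ) (k : ℤ) (hk : (L:ℤ) ≤ k) : NET L k = 0 :=
  NET_eq_zero L k (by rwa [_root_.abs_of_nonneg (by omega)])

noncomputable def ccET (L : ℕ) : ℝ := 1 - 8/(L:ℝ)^2

noncomputable def gcET (L : ℕ) (k : ℤ) : ℝ :=
  (NET L (k-1) + NET L (k+1))/2 - ccET L * NET L k

lemma keyineq (L l : ℝ) (hl : 1 ≤ l) (hl' : l ≤ L - 1) :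
    |(6*L^5 + 50*L^4 + 140*L^3 + 160*L^2 + 64*L
      + l*(30*L^4 + 60*L^3 - 60*L^2 - 160*L - 64)
      + l^2*(-80*L^3 - 240*L^2 - 160*L)
      + l^3*(60*L^2 + 160*L + 80) - 16*l^5)| * 2
    ≤ 5*(6*L^5 + 50*L^4 + 140*L^3 + 160*L^2 + 64*L) := by
  have ha : (0:ℝ) ≤ l - 1 := by linarith
  have hb : (0:ℝ) ≤ L - 1 - l := by linarith
  have h1 : (6*L^5 + 50*L^4 + 140*L^3 + 160*L^2 + 64*L
      + l*(30*L^4 + 60*L^3 - 60*L^2 - 160*L - 64)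
      + l^2*(-80*L^3 - 240*L^2 - 160*L)
      + l^3*(60*L^2 + 160*L + 80) - 16*l^5) * 2
      ≤ 5*(6*L^5 + 50*L^4 + 140*L^3 + 160*L^2 + 64*L) := by
    nlinarith [mul_nonneg (pow_nonneg ha 5) (pow_nonneg hb 0), mul_nonneg (pow_nonneg ha 4) (pow_nonneg hb 1), mul_nonneg (pow_nonneg ha 3) (pow_nonneg hb 2), mul_nonneg (pow_nonneg ha 2) (pow_nonneg hb 3), mul_nonneg (pow_nonneg ha 1) (pow_nonneg hb 4), mul_nonneg (pow_nonneg ha 0) (pow_nonneg hb 5), mul_nonneg (pow_nonneg ha 4) (pow_nonneg hb 0), mul_nonneg (pow_nonneg ha 3) (pow_nonneg hb 1), mul_nonneg (pow_nonneg ha 2) (pow_nonneg hb 2), mul_nonneg (pow_nonneg ha 1) (pow_nonneg hb 3), mul_nonneg (pow_nonneg ha 0) (pow_nonneg hb 4), mul_nonneg (pow_nonneg ha 3) (pow_nonneg hb 0), mul_nonneg (pow_nonneg ha 2) (pow_nonneg hb 1), mul_nonneg (pow_nonneg ha 1) (pow_nonneg hb 2), mul_nonneg (pow_nonneg ha 0)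 (pow_nonneg hb 3), mul_nonneg ha hb, sq_nonneg (l-1), sq_nonneg (L-1-l), ha, hb]
  have h2 : -(5*(6*L^5 + 50*L^4 + 140*L^3 + 160*L^2 + 64*L))
      ≤ (6*L^5 + 50*L^4 + 140*L^3 + 160*L^2 + 64*L
      + l*(30*L^4 + 60*L^3 - 60*L^2 - 160*L - 64)
      + l^2*(-80*L^3 - 240*L^2 - 160*L)
      + l^3*(60*L^2 + 160*L + 80) - 16*l^5) * 2 := by
    nlinarith [mul_nonneg (pow_nonneg ha 5) (pow_nonneg hb 0), mul_nonneg (pow_nonneg ha 4) (pow_nonneg hb 1), mul_nonneg (pow_nonneg ha 3) (pow_nonneg hb 2), mul_nonneg (pow_nonneg ha 2) (pow_nonneg hb 3), mul_nonneg (pow_nonneg ha 1) (pow_nonneg hb 4), mul_nonneg (pow_nonneg ha 0) (pow_nonneg hb 5), mul_nonneg (pow_nonneg ha 4) (pow_nonneg hb 0), mul_nonneg (pow_nonneg ha 3) (pow_nonneg hb 1), mul_nonneg (pow_nonneg ha 2) (pow_nonneg hb 2), mul_nonneg (pow_nonneg ha 1) (pow_nonneg hb 3), mul_nonneg (pow_nonneg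 ha 0) (pow_nonneg hb 4), mul_nonneg (pow_nonneg ha 3) (pow_nonneg hb 0), mul_nonneg (pow_nonneg ha 2) (pow_nonneg hb 1), mul_nonneg (pow_nonneg ha 1) (pow_nonneg hb 2), mul_nonneg (pow_nonneg ha 0) (pow_nonneg hb 3), mul_nonneg ha hb, sq_nonneg (l-1), sq_nonneg (L-1-l), ha, hb]
  rcases abs_cases (6*L^5 + 50*L^4 + 140*L^3 + 160*L^2 + 64*L
      + l*(30*L^4 + 60*L^3 - 60*L^2 - 160*L - 64)
      + l^2*(-80*L^3 - 240*L^2 - 160*L)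
      + l^3*(60*L^2 + 160*L + 80) - 16*l^5) with ⟨he, _⟩ | ⟨he, _⟩ <;>
    rw [he] <;> linarith

lemma gc0_eq (L : ℕ) (hL : 2 ≤ L) :
    60 * (L:ℝ)^2 * gcET L 0 = 6*(L:ℝ)^5 + 50*(L:ℝ)^4 + 140*(L:ℝ)^3 + 160*(L:ℝ)^2 + 64*(L:ℝ) := by
  have hL2 : (2:ℝ) ≤ (L:ℝ) := by exact_mod_cast hL
  have hL0 : (0:ℝ) < (L:ℝ) := by linarith
  have h1 : NET L (0-1) = NET L 1 := by
    rw [show (0-1 : ℤ) = -1 by ring, NET_neg]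
  rw [gcET, h1, NET_formula L 1 (by norm_num) (by omega),
    NET_formula L (0+1) (by norm_num) (by omega),
    NET_formula L 0 le_rfl (by omega), ccET]
  simp only [PhiET]
  push_cast
  field_simp
  ring

lemma gc0_pos (L : ℕ) (hL : 2 ≤ L) : 0 < gcET L 0 := by
  have hL0 : (2:ℝ) ≤ (L:ℝ) := by exact_mod_cast hL
  have h := gc0_eq L hL
  by_contra hneg
  push_neg at hneg
  have h60 : (0:ℝ) < 60 * (L:ℝ)^2 := by positivity
  have hle := mul_nonpos_of_nonneg_of_nonpos (le_of_lt h60) hneg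
  nlinarith [hle, h, pow_pos (show (0:ℝ) < (L:ℝ) by linarith) 5, pow_pos (show (0:ℝ) < (L:ℝ) by linarith) 4, pow_pos (show (0:ℝ) < (L:ℝ) by linarith) 3, pow_pos (show (0:ℝ) < (L:ℝ) by linarith) 2, show (0:ℝ) < (L:ℝ) by linarith]

lemma gc_eq (L : ℕ) (hL : 2 ≤ L) (k : ℤ) (h1 : 1 ≤ k) (h2 : k ≤ (L:ℤ) - 1) :
    60 * (L:ℝ)^2 * gcET L k =
      6*(L:ℝ)^5 + 50*(L:ℝ)^4 + 140*(L:ℝ)^3 + 160*(L:ℝ)^2 + 64*(L:ℝ)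
      + (k:ℝ)*(30*(L:ℝ)^4 + 60*(L:ℝ)^3 - 60*(L:ℝ)^2 - 160*(L:ℝ) - 64)
      + (k:ℝ)^2*(-80*(L:ℝ)^3 - 240*(L:ℝ)^2 - 160*(L:ℝ))
      + (k:ℝ)^3*(60*(L:ℝ)^2 + 160*(L:ℝ) + 80) - 16*(k:ℝ)^5 := by
  have hL2 : (2:ℝ) ≤ (L:ℝ) := by exact_mod_cast hL
  have hL0 : (0:ℝ) < (L:ℝ) := by linarith
  rw [gcET, NET_formula L (k-1) (by omega) (by omega),
    NET_formula L (k+1) (by omega) (by omega),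
    NET_formula L k (by omega) (by omega), ccET]
  simp only [PhiET]
  push_cast
  field_simp
  ring

lemma gc_bound (L : ℕ) (hL : 2 ≤ L) (k : ℤ) (h1 : 1 ≤ k) (h2 : k ≤ (L:ℤ) + 1) :
    |gcET L k| * 2 ≤ 5 * gcET L 0 := by
  have hLr : (2:ℝ) ≤ (L:ℝ) := by exact_mod_cast hL
  have hL0 : (0:ℝ) < (L:ℝ) := by linarith
  have h60 : (0:ℝ) < 60 * (L:ℝ)^2 := by positivity
  rcases lt_or_ge k ((L:ℤ)) with hkL | hkL
  · -- 1 ≤ k ≤ L-1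
    have hk1 : (1:ℝ) ≤ (k:ℝ) := by exact_mod_cast h1
    have hk2 : (k:ℝ) ≤ (L:ℝ) - 1 := by
      have h' : k ≤ (L:ℤ) - 1 := by omega
      exact_mod_cast h'
    have key := keyineq (L:ℝ) (k:ℝ) hk1 hk2
    rw [← gc_eq L hL k h1 (by omega), ← gc0_eq L hL] at key
    rw [_root_.abs_mul, _root_.abs_of_pos h60] at key
    have key' : (60 * (L:ℝ)^2) * (|gcET L k| * 2) ≤ (60 * (L:ℝ)^2) * (5 * gcET L 0) := by
      linarith [key]
    exact le_of_mul_le_mul_left key' h60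
  · rcases eq_or_lt_of_le hkL with hk | hk
    · -- k = L
      subst hk
      have hNL : NET L (L:ℤ) = 0 := NET_eq_zero' L _ (by omega)
      have hNL1 : NET L ((L:ℤ)+1) = 0 := NET_eq_zero' L _ (by omega)
      have hgc : gcET L (L:ℤ) = ((L:ℝ))^2 / 2 := by
        rw [gcET, hNL, hNL1, NET_formula L ((L:ℤ)-1) (by omega) (by omega)]
        simp only [PhiET]
        push_cast
        ring
      rw [hgc]
      have h0 := gc0_eq L hL
      rw [_root_.abs_of_nonneg (by positivity)]
      have h60 : (0:ℝ) < 60 * (L:ℝ)^2 := by positivity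
      have key' : (60 * (L:ℝ)^2) * (((L:ℝ))^2/2*2) ≤ (60 * (L:ℝ)^2) * (5 * gcET L 0) := by
        rw [mul_comm (60 * (L:ℝ)^2) (5 * gcET L 0), mul_assoc 5]
        rw [mul_comm (gcET L 0) (60 * (L:ℝ)^2), h0]
        nlinarith [hLr, pow_pos hL0 4, pow_pos hL0 3, pow_pos hL0 2, mul_le_mul_of_nonneg_left hLr (le_of_lt (pow_pos hL0 4))]
      exact le_of_mul_le_mul_left key' h60
    · -- k = L+1
      have hz : gcET L k = 0 := by
        rw [gcET, NET_eq_zero' L (k-1) (by omega), NET_eq_zero' L (k+1) (by omega),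
          NET_eq_zero' L k (by omega)]
        ring
      rw [hz, _root_.abs_zero, zero_mul]
      nlinarith [gc0_pos L hL]

lemma NET_eq_zero'' (L : ℕ) (k : ℤ) (hk : k ≤ -(L:ℤ)) : NET L k = 0 := by
  have h := NET_neg L (-k)
  simp only [neg_neg] at h
  rw [h]
  exact NET_eq_zero' L (-k) (by omega)

lemma unit_identity (L : ℕ) (hL : 2 ≤ L) (w : ℂ) (hw : ‖w‖ = 1) (θ : ℝ)
    (hwθ : w = Complex.exp ((θ:ℂ) * I)) :
    ((Real.cos θ - ccET L : ℝ) : ℂ) *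
      ((∑ r ∈ range L, (uET L r : ℂ) * w ^ r) *
        (starRingEnd ℂ) (∑ s ∈ range L, (uET L s : ℂ) * w ^ s))
    = ∑ k ∈ Finset.Icc (-(L:ℤ)-1) ((L:ℤ)+1), (gcET L k : ℂ) * w ^ k := by
  have hw0 : w ≠ 0 := by
    intro h
    rw [h] at hw
    simp at hw
  have hconj : (starRingEnd ℂ) w = w⁻¹ := (Complex.inv_eq_conj hw).symm
  have hinv : w⁻¹ = Complex.exp (-(θ:ℂ) * I) := by
    rw [hwθ, ← Complex.exp_neg]
    ring_nf
  have hsum : w + w⁻¹ = 2 * Complex.cos (θ:ℂ) := by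
    rw [hinv]
    nth_rewrite 1 [hwθ]
    rw [Complex.exp_mul_I, Complex.exp_mul_I, Complex.cos_neg, Complex.sin_neg]
    ring
  have hcos : ((Real.cos θ : ℝ) : ℂ) = (w + w⁻¹)/2 := by
    rw [Complex.ofReal_cos, hsum]
    ring
  set c := ccET L with hc
  set T : ℤ → ℂ := fun k => (w ^ (k+1) + w ^ (k-1))/2 - (c : ℂ) * w ^ k with hT
  have step1 : ((Real.cos θ - c : ℝ) : ℂ) *
      ((∑ r ∈ range L, (uET L r : ℂ) * w ^ r) *
        (starRingEnd ℂ) (∑ s ∈ range L, (uET L s : ℂ) * w ^ s))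
      = ∑ r ∈ range L, ∑ s ∈ range L,
          (uET L r : ℂ) * (uET L s : ℂ) * T ((r:ℤ) - (s:ℤ)) := by
    rw [map_sum, Finset.sum_mul_sum, Finset.mul_sum]
    refine Finset.sum_congr rfl fun r _ => ?_
    rw [Finset.mul_sum]
    refine Finset.sum_congr rfl fun s _ => ?_
    rw [map_mul, Complex.conj_ofReal, map_pow, hconj]
    have hzr : w ^ r = w ^ ((r:ℤ)) := by rw [zpow_natCast]
    have hzs : (w⁻¹) ^ s = w ^ (-(s:ℤ)) := by rw [inv_pow, ← zpow_natCast, ← zpow_neg]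
    rw [hzr, hzs]
    have hmul : w ^ ((r:ℤ)) * w ^ (-(s:ℤ)) = w ^ ((r:ℤ) - s) := by
      rw [← zpow_add₀ hw0]; ring_nf
    have hsplit : ((Real.cos θ - c : ℝ) : ℂ) = (w + w⁻¹)/2 - (c:ℂ) := by
      push_cast
      rw [← Complex.ofReal_cos, hcos]
    have e1 : w * w ^ ((r:ℤ) - s) = w ^ (((r:ℤ) - s) + 1) := by
      rw [zpow_add_one₀ hw0]; ring
    have e2 : w⁻¹ * w ^ ((r:ℤ) - s) = w ^ (((r:ℤ) - s) - 1) := by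
      rw [zpow_sub_one₀ hw0]; ring
    calc ((Real.cos θ - c : ℝ) : ℂ) * ((uET L r : ℂ) * w ^ ((r:ℤ)) * ((uET L s : ℂ) * w ^ (-(s:ℤ))))
        = ((Real.cos θ - c : ℝ) : ℂ) * ((uET L r : ℂ) * (uET L s : ℂ) * (w ^ ((r:ℤ)) * w ^ (-(s:ℤ)))) := by ring
      _ = ((w + w⁻¹)/2 - (c:ℂ)) * ((uET L r : ℂ) * (uET L s : ℂ) * w ^ ((r:ℤ) - s)) := by
          rw [hsplit, hmul]
      _ = (uET L r : ℂ) * (uET L s : ℂ) *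
            ((w * w ^ ((r:ℤ) - s) + w⁻¹ * w ^ ((r:ℤ) - s))/2 - (c:ℂ) * w ^ ((r:ℤ) - s)) := by
          ring
      _ = (uET L r : ℂ) * (uET L s : ℂ) * T ((r:ℤ) - s) := by rw [hT, e1, e2]
  have hrhs : ∀ k : ℤ, (NET L k : ℂ) = ∑ r ∈ range L, ∑ s ∈ range L,
      if (r:ℤ) - (s:ℤ) = k then (uET L r : ℂ) * (uET L s : ℂ) else 0 := by
    intro k
    rw [NET_def]
    push_cast [apply_ite ((↑·) : ℝ → ℂ)]
    rfl
  have step2 : ∑ r ∈ range L, ∑ s ∈ range L,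
      (uET L r : ℂ) * (uET L s : ℂ) * T ((r:ℤ) - (s:ℤ))
      = ∑ k ∈ Finset.Icc (-(L:ℤ)) ((L:ℤ)), (NET L k : ℂ) * T k := by
    refine Eq.symm ?_
    calc ∑ k ∈ Finset.Icc (-(L:ℤ)) ((L:ℤ)), (NET L k : ℂ) * T k
        = ∑ k ∈ Finset.Icc (-(L:ℤ)) ((L:ℤ)), ∑ r ∈ range L, ∑ s ∈ range L,
            (if (r:ℤ) - (s:ℤ) = k then (uET L r : ℂ) * (uET L s : ℂ) else 0) * T k := by
          refine Finset.sum_congr rfl fun k _ => ?_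
          rw [hrhs k, Finset.sum_mul]
          exact Finset.sum_congr rfl fun r _ => by rw [Finset.sum_mul]
      _ = ∑ r ∈ range L, ∑ k ∈ Finset.Icc (-(L:ℤ)) ((L:ℤ)), ∑ s ∈ range L,
            (if (r:ℤ) - (s:ℤ) = k then (uET L r : ℂ) * (uET L s : ℂ) else 0) * T k :=
          Finset.sum_comm
      _ = ∑ r ∈ range L, ∑ s ∈ range L, ∑ k ∈ Finset.Icc (-(L:ℤ)) ((L:ℤ)),
            (if (r:ℤ) - (s:ℤ) = k then (uET L r : ℂ) * (uET L s : ℂ) else 0) * T k :=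
          Finset.sum_congr rfl fun r _ => Finset.sum_comm
      _ = ∑ r ∈ range L, ∑ s ∈ range L,
            (uET L r : ℂ) * (uET L s : ℂ) * T ((r:ℤ) - (s:ℤ)) := by
          refine Finset.sum_congr rfl fun r hr => Finset.sum_congr rfl fun s hs => ?_
          rw [Finset.mem_range] at hr hs
          have hite : ∀ k ∈ Finset.Icc (-(L:ℤ)) ((L:ℤ)),
              (if (r:ℤ) - (s:ℤ) = k then (uET L r : ℂ) * (uET L s : ℂ) else 0) * T k
              = if (r:ℤ) - (s:ℤ) = k then (uET L r : ℂ) * (uET L s : ℂ) * T k else 0 := by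
            intro k _
            split <;> simp
          rw [Finset.sum_congr rfl hite, Finset.sum_ite_eq (Finset.Icc (-(L:ℤ)) ((L:ℤ)))]
          rw [if_pos (by rw [Finset.mem_Icc]; omega)]
  have shift : ∀ (t : ℤ), ∑ k ∈ Finset.Icc (-(L:ℤ)) ((L:ℤ)), (NET L k : ℂ) * w ^ (k + t)
      = ∑ k ∈ Finset.Icc (-(L:ℤ)+t) ((L:ℤ)+t), (NET L (k - t) : ℂ) * w ^ k := by
    intro t
    refine Finset.sum_nbij' (i := fun k => k + t) (j := fun k => k - t) ?_ ?_ ?_ ?_ ?_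
    · intro a ha; rw [Finset.mem_Icc] at ha ⊢; omega
    · intro a ha; rw [Finset.mem_Icc] at ha ⊢; omega
    · intro a _; omega
    · intro a _; omega
    · intro a _; simp
  have extend : ∀ (f : ℤ → ℂ) (A B : ℤ), -(L:ℤ)-1 ≤ A → B ≤ (L:ℤ)+1 →
      (∀ k, (k < A ∨ B < k) → f k = 0) →
      ∑ k ∈ Finset.Icc A B, f k = ∑ k ∈ Finset.Icc (-(L:ℤ)-1) ((L:ℤ)+1), f k := by
    intro f A B hA hB h0
    apply Finset.sum_subset
    · intro k hk
      rw [Finset.mem_Icc] at hk ⊢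
      omega
    · intro k hk hk'
      rw [Finset.mem_Icc] at hk
      apply h0
      by_contra hcon
      push_neg at hcon
      exact hk' (Finset.mem_Icc.mpr ⟨by omega, by omega⟩)
  have step3 : ∑ k ∈ Finset.Icc (-(L:ℤ)) ((L:ℤ)), (NET L k : ℂ) * T k
      = ∑ k ∈ Finset.Icc (-(L:ℤ)-1) ((L:ℤ)+1), (gcET L k : ℂ) * w ^ k := by
    have e : ∀ k ∈ Finset.Icc (-(L:ℤ)) ((L:ℤ)), (NET L k : ℂ) * T k
        = (NET L k : ℂ) * w ^ (k+1) * (1/2) + ((NET L k : ℂ) * w ^ (k+(-1)) * (1/2)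
          - (NET L k : ℂ) * w ^ (k+0) * (c:ℂ)) := by
      intro k _
      simp only [hT]
      rw [show k + (-1) = k - 1 by ring, show k + 0 = k by ring]
      ring
    rw [Finset.sum_congr rfl e, Finset.sum_add_distrib, Finset.sum_sub_distrib,
      ← Finset.sum_mul, ← Finset.sum_mul, ← Finset.sum_mul, shift 1, shift (-1), shift 0]
    rw [extend (fun i => (NET L (i - 1) : ℂ) * w ^ i) (-(L:ℤ)+1) ((L:ℤ)+1)
      (by omega) (by omega) (fun k hk => by
        have hz : NET L (k - 1) = 0 := by
          rcases hk with h | h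
          · exact NET_eq_zero'' L _ (by omega)
          · exact NET_eq_zero' L _ (by omega)
        rw [hz]; simp)]
    rw [extend (fun i => (NET L (i - (-1)) : ℂ) * w ^ i) (-(L:ℤ)+(-1)) ((L:ℤ)+(-1))
      (by omega) (by omega) (fun k hk => by
        have hz : NET L (k - (-1)) = 0 := by
          rcases hk with h | h
          · exact NET_eq_zero'' L _ (by omega)
          · exact NET_eq_zero' L _ (by omega)
        rw [hz]; simp)]
    rw [extend (fun i => (NET L (i - 0) : ℂ) * w ^ i) (-(L:ℤ)+0) ((L:ℤ)+0)
      (by omega) (by omega) (fun k hk => by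
        have hz : NET L (k - 0) = 0 := by
          rcases hk with h | h
          · exact NET_eq_zero'' L _ (by omega)
          · exact NET_eq_zero' L _ (by omega)
        rw [hz]; simp)]
    rw [Finset.sum_mul, Finset.sum_mul, Finset.sum_mul, ← Finset.sum_sub_distrib,
      ← Finset.sum_add_distrib]
    refine Finset.sum_congr rfl fun k _ => ?_
    rw [show k - (-1) = k + 1 by ring, show k - 0 = k by ring]
    push_cast [gcET, hc]
    ring
  rw [step1, step2, step3]

lemma gcET_neg (L : ℕ) (k : ℤ) : gcET L (-k) = gcET L k := by
  unfold gcET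
  rw [show -k-1 = -(k+1) by ring, show -k+1 = -(k-1) by ring,
    NET_neg, NET_neg, NET_neg]
  ring

theorem stmt_6 (L J : ℕ) (hL : 0 < L) (hJ : 0 < J) (x : Fin J → ℝ)
    (h : ∀ j : Fin J, ∀ n : ℤ, 1 / (L : ℝ) ≤ |x j - n|) :
    (J : ℝ) / 6 <
      ∑ l ∈ Finset.Icc 1 L, ‖∑ j : Fin J, Complex.exp (2 * π * I * ((l : ℝ) * x j))‖ := by
  -- L = 1 is impossible
  by_cases hL1 : L = 1
  · exfalso
    set j0 : Fin J := ⟨0, hJ⟩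
    have h1 := h j0 (round (x j0))
    have h2 := abs_sub_round (x j0)
    rw [hL1] at h1
    push_cast at h1
    rw [show (round (x j0) : ℝ) = ((round (x j0) : ℤ) : ℝ) by norm_num] at h2
    linarith
  have hL2 : 2 ≤ L := by omega
  have hLr2 : (2:ℝ) ≤ (L:ℝ) := by exact_mod_cast hL2
  have hLr0 : (0:ℝ) < (L:ℝ) := by linarith
  set θ : Fin J → ℝ := fun j => 2 * π * x j with hθ
  set z : Fin J → ℂ := fun j => Complex.exp ((θ j : ℂ) * I) with hzdef
  have habs : ∀ j, ‖z j‖ = 1 := fun j => Complex.norm_exp_ofReal_mul_I (θ j)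
  set S : ℤ → ℂ := fun k => ∑ j, z j ^ k with hS
  -- cosine bound
  have hcosb : ∀ j, Real.cos (θ j) ≤ ccET L := by
    intro j
    set n := round (x j) with hn
    set t := x j - n with ht
    have h1 : 1/(L:ℝ) ≤ |t| := h j n
    have h2 : |t| ≤ 1/2 := abs_sub_round (x j)
    have hcos1 : Real.cos (θ j) = Real.cos (2*π*t) := by
      simp only [hθ]
      have : 2 * π * x j = 2*π*t + n * (2*π) := by rw [ht]; push_cast; ring
      rw [this, Real.cos_add_int_mul_two_pi]
    have hcos2 : Real.cos (2*π*t) = Real.cos (2*π*|t|) := by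
      rcases abs_cases t with ⟨he, _⟩ | ⟨he, _⟩
      · rw [he]
      · rw [he, show 2*π*(-t) = -(2*π*t) by ring, Real.cos_neg]
    have hπ := Real.pi_pos
    have hmono : Real.cos (2*π*|t|) ≤ Real.cos (2*π/(L:ℝ)) := by
      apply Real.cos_le_cos_of_nonneg_of_le_pi
      · positivity
      · nlinarith [h2, hπ]
      · have hmul := mul_le_mul_of_nonneg_left h1 (by positivity : (0:ℝ) ≤ 2*π)
        calc 2*π/(L:ℝ) = 2*π*(1/(L:ℝ)) := by ring
          _ ≤ 2*π*|t| := hmul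
    have hquad : Real.cos (2*π/(L:ℝ)) ≤ ccET L := by
      have hb := Real.cos_le_one_sub_mul_cos_sq (x := 2*π/(L:ℝ)) (by
        rw [abs_of_pos (by positivity)]
        rw [div_le_iff₀ hLr0]
        nlinarith)
      have : 1 - 2/π^2 * (2*π/(L:ℝ))^2 = ccET L := by
        rw [ccET]
        field_simp
        ring
      linarith [hb, this.le, this.ge]
    calc Real.cos (θ j) = Real.cos (2*π*|t|) := by rw [hcos1, hcos2]
      _ ≤ Real.cos (2*π/(L:ℝ)) := hmono
      _ ≤ ccET L := hquad
  -- the kernel sum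
  set D : Fin J → ℂ := fun j => ∑ r ∈ range L, (uET L r : ℂ) * z j ^ r with hD
  set X : ℝ := ∑ j, (Real.cos (θ j) - ccET L) * Complex.normSq (D j) with hX
  have hX0 : X ≤ 0 := by
    apply Finset.sum_nonpos
    intro j _
    apply mul_nonpos_of_nonpos_of_nonneg
    · linarith [hcosb j]
    · exact Complex.normSq_nonneg _
  have hXC : (X : ℂ) = ∑ k ∈ Finset.Icc (-(L:ℤ)-1) ((L:ℤ)+1), (gcET L k : ℂ) * S k := by
    rw [hX, Complex.ofReal_sum]
    have hj : ∀ j : Fin J, ((Real.cos (θ j) - ccET L : ℝ):ℂ) * (Complex.normSq (D j) : ℂ)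
        = ∑ k ∈ Finset.Icc (-(L:ℤ)-1) ((L:ℤ)+1), (gcET L k : ℂ) * z j ^ k := by
      intro j
      simp only [hD]
      rw [← Complex.mul_conj]
      exact unit_identity L hL2 (z j) (habs j) (θ j) rfl
    calc ∑ j, (((Real.cos (θ j) - ccET L) * Complex.normSq (D j) : ℝ) : ℂ)
        = ∑ j, ∑ k ∈ Finset.Icc (-(L:ℤ)-1) ((L:ℤ)+1), (gcET L k : ℂ) * z j ^ k := by
          refine Finset.sum_congr rfl fun j _ => ?_
          rw [Complex.ofReal_mul, hj j]
      _ = ∑ k ∈ Finset.Icc (-(L:ℤ)-1) ((L:ℤ)+1), (gcET L k : ℂ) * S k := by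
          rw [Finset.sum_comm]
          refine Finset.sum_congr rfl fun k _ => ?_
          rw [hS, Finset.mul_sum]
  -- real parts
  have hXre : X = ∑ k ∈ Finset.Icc (-(L:ℤ)-1) ((L:ℤ)+1), gcET L k * (S k).re := by
    have := congrArg Complex.re hXC
    rw [Complex.ofReal_re, Complex.re_sum] at this
    rw [this]
    exact Finset.sum_congr rfl fun k _ => by rw [Complex.re_ofReal_mul]
  have hS0 : (S 0).re = J := by
    rw [hS]
    simp
  -- isolate k = 0
  have h0mem : (0:ℤ) ∈ Finset.Icc (-(L:ℤ)-1) ((L:ℤ)+1) := by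
    rw [Finset.mem_Icc]; omega
  have hsplit := Finset.sum_erase_add _ (fun k => gcET L k * (S k).re) h0mem
  have hmain : gcET L 0 * J ≤
      ∑ k ∈ (Finset.Icc (-(L:ℤ)-1) ((L:ℤ)+1)).erase 0, |gcET L k| * ‖S k‖ := by
    have hterm : ∀ k ∈ (Finset.Icc (-(L:ℤ)-1) ((L:ℤ)+1)).erase 0,
        -(|gcET L k| * ‖S k‖) ≤ gcET L k * (S k).re := by
      intro k _
      have h1 : |gcET L k * (S k).re| ≤ |gcET L k| * ‖S k‖ := by
        rw [abs_mul]
        apply mul_le_mul_of_nonneg_left _ (abs_nonneg _)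
        exact Complex.abs_re_le_norm _
      linarith [neg_abs_le (gcET L k * (S k).re)]
    have := Finset.sum_le_sum hterm
    rw [Finset.sum_neg_distrib] at this
    have hXeq : gcET L 0 * (J:ℝ) = X - ∑ k ∈ (Finset.Icc (-(L:ℤ)-1) ((L:ℤ)+1)).erase 0,
        gcET L k * (S k).re := by
      rw [hXre, ← hsplit, hS0]
      ring
    linarith
  -- pair ±k
  have hnorm_neg : ∀ k : ℤ, ‖S (-k)‖ = ‖S k‖ := by
    intro k
    have : S (-k) = (starRingEnd ℂ) (S k) := by
      rw [hS, map_sum]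
      refine Finset.sum_congr rfl fun j _ => ?_
      rw [map_zpow₀, ← Complex.inv_eq_conj (habs j), inv_zpow, ← zpow_neg]
    rw [this, RCLike.norm_conj]
  have hpair : ∑ k ∈ (Finset.Icc (-(L:ℤ)-1) ((L:ℤ)+1)).erase 0, |gcET L k| * ‖S k‖
      = 2 * ∑ k ∈ Finset.Icc (1:ℤ) ((L:ℤ)+1), |gcET L k| * ‖S k‖ := by
    have hset : (Finset.Icc (-(L:ℤ)-1) ((L:ℤ)+1)).erase 0
        = Finset.Icc (-(L:ℤ)-1) (-1) ∪ Finset.Icc (1:ℤ) ((L:ℤ)+1) := by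
      ext k
      simp only [Finset.mem_erase, Finset.mem_Icc, Finset.mem_union]
      omega
    have hdisj : Disjoint (Finset.Icc (-(L:ℤ)-1) (-1)) (Finset.Icc (1:ℤ) ((L:ℤ)+1)) := by
      rw [Finset.disjoint_left]
      intro k hk hk'
      rw [Finset.mem_Icc] at hk hk'
      omega
    rw [hset, Finset.sum_union hdisj]
    have hneg : ∑ k ∈ Finset.Icc (-(L:ℤ)-1) (-1), |gcET L k| * ‖S k‖
        = ∑ k ∈ Finset.Icc (1:ℤ) ((L:ℤ)+1), |gcET L k| * ‖S k‖ := by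
      refine Finset.sum_nbij' (i := fun k => -k) (j := fun k => -k) ?_ ?_ ?_ ?_ ?_
      · intro a ha; rw [Finset.mem_Icc] at ha ⊢; omega
      · intro a ha; rw [Finset.mem_Icc] at ha ⊢; omega
      · intro a _; omega
      · intro a _; omega
      · intro a _
        rw [gcET_neg, hnorm_neg]
    rw [hneg]
    ring
  -- drop k = L + 1
  have hgcL1 : gcET L ((L:ℤ)+1) = 0 := by
    rw [gcET, NET_eq_zero' L _ (by omega), NET_eq_zero' L _ (by omega),
      NET_eq_zero' L _ (by omega)]
    ring
  have hdrop : ∑ k ∈ Finset.Icc (1:ℤ) ((L:ℤ)+1), |gcET L k| * ‖S k‖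
      = ∑ k ∈ Finset.Icc (1:ℤ) ((L:ℤ)), |gcET L k| * ‖S k‖ := by
    refine (Finset.sum_subset ?_ ?_).symm
    · intro k hk; rw [Finset.mem_Icc] at hk ⊢; omega
    · intro k hk hk'
      rw [Finset.mem_Icc] at hk
      have : k = (L:ℤ)+1 := by
        by_contra hcon
        exact hk' (Finset.mem_Icc.mpr ⟨hk.1, by omega⟩)
      rw [this, hgcL1]
      simp
  -- bound by gc0
  have hgc0 := gc0_pos L hL2
  have hbound : ∑ k ∈ Finset.Icc (1:ℤ) ((L:ℤ)), |gcET L k| * ‖S k‖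
      ≤ (5 * gcET L 0 / 2) * ∑ k ∈ Finset.Icc (1:ℤ) ((L:ℤ)), ‖S k‖ := by
    rw [Finset.mul_sum]
    apply Finset.sum_le_sum
    intro k hk
    rw [Finset.mem_Icc] at hk
    have := gc_bound L hL2 k hk.1 (by omega)
    apply mul_le_mul_of_nonneg_right _ (norm_nonneg _)
    linarith
  -- convert to the ℕ-indexed sum
  have hconv : ∑ k ∈ Finset.Icc (1:ℤ) ((L:ℤ)), ‖S k‖
      = ∑ l ∈ Finset.Icc 1 L, ‖∑ j : Fin J, Complex.exp (2 * π * I * ((l : ℝ) * x j))‖ := by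
    refine Finset.sum_nbij' (i := fun k => k.toNat) (j := fun l => (l:ℤ)) ?_ ?_ ?_ ?_ ?_
    · intro a ha; rw [Finset.mem_Icc] at ha ⊢; omega
    · intro a ha; rw [Finset.mem_Icc] at ha ⊢; omega
    · intro a ha; rw [Finset.mem_Icc] at ha; omega
    · intro a ha; rw [Finset.mem_Icc] at ha; omega
    · intro k hk
      rw [Finset.mem_Icc] at hk
      obtain ⟨n, rfl⟩ : ∃ n : ℕ, k = (n:ℤ) := ⟨k.toNat, by omega⟩
      rw [show ((n:ℤ)).toNat = n by omega]
      congr 1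
      rw [hS]
      refine Finset.sum_congr rfl fun j _ => ?_
      rw [zpow_natCast, hzdef]
      rw [← Complex.exp_nat_mul]
      congr 1
      simp only [hθ]
      push_cast
      ring
  -- finish
  set Sig : ℝ := ∑ l ∈ Finset.Icc 1 L, ‖∑ j : Fin J, Complex.exp (2 * π * I * ((l : ℝ) * x j))‖
    with hSig
  have hfinal : gcET L 0 * (J:ℝ) ≤ gcET L 0 * (5 * Sig) := by
    calc gcET L 0 * (J:ℝ) ≤ ∑ k ∈ (Finset.Icc (-(L:ℤ)-1) ((L:ℤ)+1)).erase 0,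
          |gcET L k| * ‖S k‖ := hmain
      _ = 2 * ∑ k ∈ Finset.Icc (1:ℤ) ((L:ℤ)+1), |gcET L k| * ‖S k‖ := hpair
      _ = 2 * ∑ k ∈ Finset.Icc (1:ℤ) ((L:ℤ)), |gcET L k| * ‖S k‖ := by rw [hdrop]
      _ ≤ 2 * ((5 * gcET L 0 / 2) * ∑ k ∈ Finset.Icc (1:ℤ) ((L:ℤ)), ‖S k‖) := by
          linarith [hbound]
      _ = gcET L 0 * (5 * Sig) := by rw [hconv]; ring
  have hJ5 : (J:ℝ) ≤ 5 * Sig := le_of_mul_le_mul_left hfinal hgc0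
  have hJpos : (0:ℝ) < J := by exact_mod_cast hJ
  linarith
end

section
/- Let q, a be integers with q ≥ 1 and gcd(a,q) = 1, let N ≥ 1 be real, and suppose there exist distinct coprime positive integers q₁, q₂ ∈ [N/2, N] and an integer b with 1 ≤ b ≤ B such that a·q₁·q₂ ≡ b (mod q). Then there exists an integer k with |a/q - k/(q₁·q₂)| ≤ 4B/(q·N²), and moreover k/(q₁q₂) = a₁/q₁ + a₂/q₂ for some integers a₁, a₂. -/
theorem stmt_13 (q : ℕ) (hq : 1 ≤ q) (a : ℤ) (ha : IsCoprime a (q : ℤ))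
    (N B : ℝ) (hN : 1 ≤ N) (q₁ q₂ : ℕ) (hne : q₁ ≠ q₂) (hco : Nat.Coprime q₁ q₂)
    (h₁ : N / 2 ≤ (q₁ : ℝ)) (h₁' : (q₁ : ℝ) ≤ N) (h₂ : N / 2 ≤ (q₂ : ℝ)) (h₂' : (q₂ : ℝ) ≤ N)
    (b : ℤ) (hb1 : 1 ≤ b) (hbB : (b : ℝ) ≤ B)
    (hcong : a * q₁ * q₂ ≡ b [ZMOD (q : ℤ)]) :
    ∃ k a₁ a₂ : ℤ, |(a : ℝ) / q - (k : ℝ) / (q₁ * q₂)| ≤ 4 * B / (q * N ^ 2) ∧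
      (k : ℝ) / (q₁ * q₂) = (a₁ : ℝ) / q₁ + (a₂ : ℝ) / q₂ := by
  have hq1R : (0 : ℝ) < q₁ := lt_of_lt_of_le (by linarith) h₁
  have hq2R : (0 : ℝ) < q₂ := lt_of_lt_of_le (by linarith) h₂
  have hqR : (0 : ℝ) < q := by exact_mod_cast hq
  have hNpos : (0 : ℝ) < N := by linarith
  obtain ⟨m, hm⟩ := hcong.dvd
  set k : ℤ := -m with hkdef
  have hk : (a : ℤ) * q₁ * q₂ - q * k = b := by
    simp only [hkdef]; linarith [hm]
  have hcop : IsCoprime (q₁ : ℤ) (q₂ : ℤ) := by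
    rw [Int.isCoprime_iff_gcd_eq_one]
    exact_mod_cast hco
  obtain ⟨u, v, huv⟩ := hcop
  refine ⟨k, k * v, k * u, ?_, ?_⟩
  · have hkR : (a : ℝ) * q₁ * q₂ - q * k = b := by exact_mod_cast hk
    have heq : (a : ℝ) / q - (k : ℝ) / (q₁ * q₂) = b / (q * (q₁ * q₂)) := by
      field_simp
      nlinarith [hkR]
    rw [heq, abs_of_nonneg (by positivity)]
    rw [div_le_div_iff₀ (by positivity) (by positivity)]
    have hb1R : (1 : ℝ) ≤ b := by exact_mod_cast hb1
    have hb0 : (0 : ℝ) ≤ b := by linarith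
    have hN2 : N ^ 2 ≤ 4 * (q₁ * q₂) := by nlinarith
    have hB0 : (0 : ℝ) ≤ B := le_trans (by linarith) hbB
    nlinarith [mul_le_mul hbB hN2 (by positivity) hB0, mul_le_mul_of_nonneg_left
      (mul_le_mul hbB hN2 (by positivity) hB0) hqR.le]
  · have huvR : (u : ℝ) * q₁ + v * q₂ = 1 := by exact_mod_cast huv
    field_simp
    push_cast
    linear_combination -(k : ℝ) * huvR
end

section
/- Let N ≥ 32 and suppose q > N is an integer with gcd(a,q) = 1 and let 𝒫 be the set of primes in [N/2, N]. Then ∑_{l=1}^{q} |∑_{p ∈ 𝒫} e(l·p²·a/q)|² ≤ q · #{(p₁,p₂) ∈ 𝒫² : p₂² ≡ p₁² (mod q)} ≪ q·d(q)·N, where e(x) = e^{2πix}. -/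
open Complex Real

private lemma hsq_aux (z : ℂ) : ((‖z‖ ^ 2 : ℝ) : ℂ) = z * (starRingEnd ℂ) z := by
  rw [Complex.mul_conj]; norm_cast
  simp [Complex.normSq_eq_norm_sq]

private lemma hconj_aux (r : ℝ) :
    (starRingEnd ℂ) (2 * (π : ℂ) * Complex.I * (r : ℂ))
      = -(2 * (π : ℂ) * Complex.I * (r : ℂ)) := by
  have h : (2 * (π : ℂ) * Complex.I * (r : ℂ)) = ((2 * π * r : ℝ) : ℂ) * Complex.I := by
    push_cast; ring
  rw [h, map_mul, Complex.conj_ofReal, Complex.conj_I]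
  ring

private lemma aux_orth (q : ℕ) (hq : 0 < q) (m : ℤ) :
    ∑ l ∈ Finset.Icc 1 q, Complex.exp (2 * (π : ℂ) * Complex.I * ((m : ℂ) / (q : ℂ))) ^ l
      = if (q : ℤ) ∣ m then (q : ℂ) else 0 := by
  have hqC : (q : ℂ) ≠ 0 := Nat.cast_ne_zero.mpr hq.ne'
  set x : ℂ := Complex.exp (2 * (π : ℂ) * Complex.I * ((m : ℂ) / (q : ℂ))) with hxdef
  have hxq : x ^ q = 1 := by
    rw [hxdef, ← Complex.exp_nat_mul]
    have h : (q : ℂ) * (2 * (π : ℂ) * Complex.I * ((m : ℂ) / (q : ℂ)))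
        = (m : ℂ) * (2 * (π : ℂ) * Complex.I) := by
      field_simp
    rw [h, Complex.exp_int_mul_two_pi_mul_I]
  by_cases hdvd : (q : ℤ) ∣ m
  · have hdvd2 := hdvd
    obtain ⟨k, hk⟩ := hdvd
    have hx1 : x = 1 := by
      rw [hxdef]
      have hm : (m : ℂ) = (q : ℂ) * (k : ℂ) := by rw [hk]; push_cast; ring
      have h : 2 * (π : ℂ) * Complex.I * ((m : ℂ) / (q : ℂ))
          = (k : ℂ) * (2 * (π : ℂ) * Complex.I) := by
        rw [hm]; field_simp
      rw [h, Complex.exp_int_mul_two_pi_mul_I]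
    rw [if_pos hdvd2, hx1]
    simp [Nat.card_Icc]
  · have hx1 : x ≠ 1 := by
      intro h
      rw [hxdef, Complex.exp_eq_one_iff] at h
      obtain ⟨n, hn⟩ := h
      have h3 : ((m : ℂ) / (q : ℂ)) * (2 * (π : ℂ) * Complex.I)
          = (n : ℂ) * (2 * (π : ℂ) * Complex.I) := by linear_combination hn
      have h4 : (m : ℂ) / (q : ℂ) = (n : ℂ) :=
        mul_right_cancel₀ Complex.two_pi_I_ne_zero h3
      have h5 : (m : ℂ) = (n : ℂ) * (q : ℂ) := (div_eq_iff hqC).mp h4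
      have h6 : m = n * q := by exact_mod_cast h5
      exact hdvd ⟨n, by rw [h6, mul_comm]⟩
    have hr : Finset.range (q + 1) = insert 0 (Finset.Icc 1 q) := by
      ext i
      simp only [Finset.mem_range, Finset.mem_insert, Finset.mem_Icc]
      omega
    have hgeom := geom_sum_eq hx1 (q + 1)
    rw [hr, Finset.sum_insert (by simp)] at hgeom
    have hxq1 : x ^ (q + 1) = x := by rw [pow_succ, hxq, one_mul]
    rw [hxq1, pow_zero] at hgeom
    have hne : x - 1 ≠ 0 := sub_ne_zero.mpr hx1
    rw [div_self hne] at hgeom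
    have hsum : ∑ l ∈ Finset.Icc 1 q, x ^ l = 0 := by linear_combination hgeom
    rw [hsum, if_neg hdvd]

private lemma aux_unique (N q : ℕ) (hq : N < q) (p₁ p₂ p₂' : ℕ)
    (hp₁ : p₁.Prime) (hp₂ : p₂.Prime) (hp₂' : p₂'.Prime)
    (h2 : p₂ ≤ N) (h2' : p₂' ≤ N) (g2 : N ≤ 2 * p₂) (g2' : N ≤ 2 * p₂')
    (hd : (q : ℤ) ∣ (p₁ : ℤ) ^ 2 - (p₂ : ℤ) ^ 2) (hd' : (q : ℤ) ∣ (p₁ : ℤ) ^ 2 - (p₂' : ℤ) ^ 2)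
    (hg : Int.gcd ((p₂ : ℤ) - (p₁ : ℤ)) (q : ℤ) = Int.gcd ((p₂' : ℤ) - (p₁ : ℤ)) (q : ℤ)) :
    p₂ = p₂' := by
  have hq0 : q ≠ 0 := by omega
  by_cases hpq : p₁ ∣ q
  · have key : ∀ r : ℕ, r.Prime → (q : ℤ) ∣ (p₁ : ℤ) ^ 2 - (r : ℤ) ^ 2 → r = p₁ := by
      intro r hr hdr
      have hpq' : (p₁ : ℤ) ∣ (q : ℤ) := Int.natCast_dvd_natCast.mpr hpq
      have h1 : (p₁ : ℤ) ∣ (r : ℤ) ^ 2 := by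
        have ha := hpq'.trans hdr
        have hb : (p₁ : ℤ) ∣ (p₁ : ℤ) ^ 2 - ((p₁ : ℤ) ^ 2 - (r : ℤ) ^ 2) :=
          dvd_sub (dvd_pow_self _ two_ne_zero) ha
        simpa using hb
      have h2 : p₁ ∣ r ^ 2 := by exact_mod_cast h1
      have h3 : p₁ ∣ r := hp₁.dvd_of_dvd_pow h2
      exact ((Nat.prime_dvd_prime_iff_eq hp₁ hr).mp h3).symm
    rw [key p₂ hp₂ hd, key p₂' hp₂' hd']
  · have hcop : Nat.Coprime p₁ q := (hp₁.coprime_iff_not_dvd).mpr hpq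
    set e : ℕ := Int.gcd ((p₂ : ℤ) - (p₁ : ℤ)) (q : ℤ) with he
    have hqZ : ((q : ℤ)) ≠ 0 := Int.natCast_ne_zero.mpr hq0
    have hepos : 0 < e := Int.gcd_pos_iff.mpr (Or.inr hqZ)
    have heZ : ((e : ℤ)) ≠ 0 := Int.natCast_ne_zero.mpr hepos.ne'
    set q₀ : ℤ := (q : ℤ) / (e : ℤ) with hq₀
    have heq : (e : ℤ) ∣ (q : ℤ) := by rw [he]; exact Int.gcd_dvd_right _ _
    have heqq : (e : ℤ) * q₀ = (q : ℤ) := Int.mul_ediv_cancel' heq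
    have main : ∀ r : ℕ, (q : ℤ) ∣ (p₁ : ℤ) ^ 2 - (r : ℤ) ^ 2 →
        Int.gcd ((r : ℤ) - (p₁ : ℤ)) (q : ℤ) = e →
        q₀ ∣ (r : ℤ) + (p₁ : ℤ) ∧ (e : ℤ) ∣ (r : ℤ) - (p₁ : ℤ) := by
      intro r hdr hgr
      have heD : (e : ℤ) ∣ (r : ℤ) - (p₁ : ℤ) := by rw [← hgr]; exact Int.gcd_dvd_left _ _
      refine ⟨?_, heD⟩
      have hq2 : (q : ℤ) ∣ ((r : ℤ) - (p₁ : ℤ)) * ((r : ℤ) + (p₁ : ℤ)) := by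
        have h : ((r : ℤ) - (p₁ : ℤ)) * ((r : ℤ) + (p₁ : ℤ))
            = -((p₁ : ℤ) ^ 2 - (r : ℤ) ^ 2) := by ring
        rw [h]; exact dvd_neg.mpr hdr
      have hgcd1 : Int.gcd (((r : ℤ) - (p₁ : ℤ)) / (e : ℤ)) q₀ = 1 := by
        have h := Int.gcd_div_gcd_div_gcd (i := (r : ℤ) - (p₁ : ℤ)) (j := (q : ℤ))
          (by rw [hgr]; exact hepos)
        rw [hgr] at h
        exact h
      have hDe : (e : ℤ) * (((r : ℤ) - (p₁ : ℤ)) / (e : ℤ)) = (r : ℤ) - (p₁ : ℤ) :=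
        Int.mul_ediv_cancel' heD
      have hdvd2 : q₀ ∣ (((r : ℤ) - (p₁ : ℤ)) / (e : ℤ)) * ((r : ℤ) + (p₁ : ℤ)) := by
        have h : (e : ℤ) * q₀ ∣ (e : ℤ) * ((((r : ℤ) - (p₁ : ℤ)) / (e : ℤ)) * ((r : ℤ) + (p₁ : ℤ))) := by
          rw [← mul_assoc, hDe, heqq]; exact hq2
        exact (mul_dvd_mul_iff_left heZ).mp h
      have hco : IsCoprime q₀ (((r : ℤ) - (p₁ : ℤ)) / (e : ℤ)) := by
        rw [Int.isCoprime_iff_gcd_eq_one, Int.gcd_comm]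
        exact hgcd1
      exact hco.dvd_of_dvd_mul_left hdvd2
    obtain ⟨hA, hB⟩ := main p₂ hd he.symm
    obtain ⟨hA', hB'⟩ := main p₂' hd' hg.symm
    set S : ℤ := (p₂ : ℤ) - (p₂' : ℤ) with hS
    have heS : (e : ℤ) ∣ S := by
      have h : S = ((p₂ : ℤ) - (p₁ : ℤ)) - ((p₂' : ℤ) - (p₁ : ℤ)) := by rw [hS]; ring
      rw [h]; exact dvd_sub hB hB'
    have hq₀S : q₀ ∣ S := by
      have h : S = ((p₂ : ℤ) + (p₁ : ℤ)) - ((p₂' : ℤ) + (p₁ : ℤ)) := by rw [hS]; ring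
      rw [h]; exact dvd_sub hA hA'
    set L : ℕ := Int.lcm (e : ℤ) q₀ with hL
    have hLS : (L : ℤ) ∣ S := Int.coe_lcm_dvd heS hq₀S
    set g : ℕ := Int.gcd (e : ℤ) q₀ with hgdef
    have hgL : g * L = q := by
      have h := Int.gcd_mul_lcm (e : ℤ) q₀
      rw [← Int.natAbs_mul, heqq] at h
      simpa [hgdef, hL, Int.natAbs_natCast] using h
    have hge : (g : ℤ) ∣ (e : ℤ) := Int.gcd_dvd_left _ _
    have hgq₀ : (g : ℤ) ∣ q₀ := Int.gcd_dvd_right _ _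
    have hg2p : (g : ℤ) ∣ 2 * (p₁ : ℤ) := by
      have ha : (g : ℤ) ∣ (p₂ : ℤ) - (p₁ : ℤ) := hge.trans hB
      have hb : (g : ℤ) ∣ (p₂ : ℤ) + (p₁ : ℤ) := hgq₀.trans hA
      have h : 2 * (p₁ : ℤ) = ((p₂ : ℤ) + (p₁ : ℤ)) - ((p₂ : ℤ) - (p₁ : ℤ)) := by ring
      rw [h]; exact dvd_sub hb ha
    have hg2pN : g ∣ 2 * p₁ := by exact_mod_cast hg2p
    have hgqN : g ∣ q := by
      have h : (g : ℤ) ∣ (q : ℤ) := hge.trans heq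
      exact_mod_cast h
    have hgcop : g.Coprime p₁ := (Nat.Coprime.coprime_dvd_right hgqN hcop).symm
    have hg2' : g ∣ 2 := hgcop.dvd_of_dvd_mul_right hg2pN
    have hgle : g ≤ 2 := Nat.le_of_dvd two_pos hg2'
    have hq2L : q ≤ 2 * L := by
      calc q = g * L := hgL.symm
        _ ≤ 2 * L := Nat.mul_le_mul_right L hgle
    have hlt : |S| < (L : ℤ) := by
      rcases abs_cases S with ⟨h, _⟩ | ⟨h, _⟩ <;> rw [h, hS] <;> omega
    have hS0 : S = 0 := Int.eq_zero_of_abs_lt_dvd hLS hlt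
    rw [hS] at hS0
    omega

private lemma aux_count (N q : ℕ) (hq : N < q) :
    ((((Finset.Icc 1 N).filter (fun p => Nat.Prime p ∧ N ≤ 2 * p)) ×ˢ
        ((Finset.Icc 1 N).filter (fun p => Nat.Prime p ∧ N ≤ 2 * p))).filter
      (fun pp => ((pp.2 : ℤ)) ^ 2 ≡ ((pp.1 : ℤ)) ^ 2 [ZMOD (q : ℤ)])).card
      ≤ N * q.divisors.card := by
  have hq0 : q ≠ 0 := by omega
  have hcard : (Finset.Icc 1 N ×ˢ q.divisors).card = N * q.divisors.card := by
    rw [Finset.card_product, Nat.card_Icc, Nat.add_sub_cancel]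
  rw [← hcard]
  apply Finset.card_le_card_of_injOn
    (fun pp => (pp.1, Int.gcd ((pp.2 : ℤ) - (pp.1 : ℤ)) (q : ℤ)))
  · intro pp hpp
    simp only [Finset.mem_coe, Finset.mem_filter, Finset.mem_product, Finset.mem_Icc] at hpp
    obtain ⟨⟨⟨h1, _⟩, _⟩, _⟩ := hpp
    simp only [Finset.mem_coe, Finset.mem_product, Finset.mem_Icc, Nat.mem_divisors]
    refine ⟨h1, ?_, hq0⟩
    exact_mod_cast (Int.gcd_dvd_right _ _ :
      ((Int.gcd ((pp.2 : ℤ) - (pp.1 : ℤ)) (q : ℤ) : ℤ)) ∣ (q : ℤ))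
  · intro pp hpp pp' hpp' heq
    simp only [Finset.coe_filter, Set.mem_setOf_eq, Finset.mem_product, Finset.mem_filter,
      Finset.mem_Icc] at hpp hpp'
    obtain ⟨⟨⟨_, hpr1, _⟩, ⟨_, hle2⟩, hpr2, hge2⟩, hcond⟩ := hpp
    obtain ⟨⟨⟨_, hpr1', _⟩, ⟨_, hle2'⟩, hpr2', hge2'⟩, hcond'⟩ := hpp'
    simp only [Prod.mk.injEq] at heq
    obtain ⟨hfst, hsnd⟩ := heq
    have hd : (q : ℤ) ∣ (pp.1 : ℤ) ^ 2 - (pp.2 : ℤ) ^ 2 := Int.modEq_iff_dvd.mp hcond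
    have hd' : (q : ℤ) ∣ (pp'.1 : ℤ) ^ 2 - (pp'.2 : ℤ) ^ 2 := Int.modEq_iff_dvd.mp hcond'
    rw [← hfst] at hd' hsnd
    have h22 : pp.2 = pp'.2 :=
      aux_unique N q hq pp.1 pp.2 pp'.2 hpr1 hpr2 hpr2' hle2 hle2' hge2 hge2' hd hd' hsnd
    exact Prod.ext_iff.mpr ⟨hfst, h22⟩

theorem stmt_16 : ∃ C : ℝ, 0 < C ∧ ∀ N q : ℕ, 32 ≤ N → N < q → ∀ a : ℤ,
    IsCoprime a (q : ℤ) →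
    (∑ l ∈ Finset.Icc 1 q,
        ‖∑ p ∈ (Finset.Icc 1 N).filter (fun p => Nat.Prime p ∧ N ≤ 2 * p),
          Complex.exp (2 * π * I * (((l : ℝ) * (p : ℝ) ^ 2 * a / q : ℝ) : ℂ))‖ ^ 2 ≤
      (q : ℝ) * ((((Finset.Icc 1 N).filter (fun p => Nat.Prime p ∧ N ≤ 2 * p)) ×ˢ
          ((Finset.Icc 1 N).filter (fun p => Nat.Prime p ∧ N ≤ 2 * p))).filter
        (fun pp => ((pp.2 : ℤ)) ^ 2 ≡ ((pp.1 : ℤ)) ^ 2 [ZMOD (q : ℤ)])).card) ∧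
    (q : ℝ) * ((((Finset.Icc 1 N).filter (fun p => Nat.Prime p ∧ N ≤ 2 * p)) ×ˢ
          ((Finset.Icc 1 N).filter (fun p => Nat.Prime p ∧ N ≤ 2 * p))).filter
        (fun pp => ((pp.2 : ℤ)) ^ 2 ≡ ((pp.1 : ℤ)) ^ 2 [ZMOD (q : ℤ)])).card ≤
      C * q * q.divisors.card * N := by
  refine ⟨1, one_pos, ?_⟩
  intro N q hN hq a hcop
  have hq0 : 0 < q := by omega
  have hqC : (q : ℂ) ≠ 0 := Nat.cast_ne_zero.mpr (by omega)
  set P := (Finset.Icc 1 N).filter (fun p => Nat.Prime p ∧ N ≤ 2 * p) with hP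
  set K := ((P ×ˢ P).filter
    (fun pp => ((pp.2 : ℤ)) ^ 2 ≡ ((pp.1 : ℤ)) ^ 2 [ZMOD (q : ℤ)])) with hKdef
  have hiff : ∀ pp : ℕ × ℕ,
      ((q : ℤ) ∣ ((pp.1 : ℤ) ^ 2 - (pp.2 : ℤ) ^ 2) * a) ↔
        (((pp.2 : ℤ)) ^ 2 ≡ ((pp.1 : ℤ)) ^ 2 [ZMOD (q : ℤ)]) := by
    intro pp
    constructor
    · intro h
      exact Int.modEq_iff_dvd.mpr (hcop.symm.dvd_of_dvd_mul_right h)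
    · intro h
      exact dvd_mul_of_dvd_left (Int.modEq_iff_dvd.mp h) a
  constructor
  · apply le_of_eq
    apply Complex.ofReal_injective
    rw [Complex.ofReal_sum, Complex.ofReal_mul, Complex.ofReal_natCast, Complex.ofReal_natCast]
    have step1 : ∀ l ∈ Finset.Icc 1 q,
        ((‖∑ p ∈ P, Complex.exp (2 * π * I * (((l : ℝ) * (p : ℝ) ^ 2 * a / q : ℝ) : ℂ))‖ ^ 2
            : ℝ) : ℂ)
          = ∑ p₁ ∈ P, ∑ p₂ ∈ P,
              Complex.exp (2 * (π : ℂ) * Complex.I *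
                (((((p₁ : ℤ) ^ 2 - (p₂ : ℤ) ^ 2) * a : ℤ) : ℂ) / (q : ℂ))) ^ l := by
      intro l _
      rw [hsq_aux, map_sum, Finset.sum_mul_sum]
      refine Finset.sum_congr rfl fun p₁ _ => Finset.sum_congr rfl fun p₂ _ => ?_
      rw [← Complex.exp_conj, hconj_aux, ← Complex.exp_add, ← Complex.exp_nat_mul]
      congr 1
      push_cast
      field_simp
      ring
    calc ∑ l ∈ Finset.Icc 1 q,
          ((‖∑ p ∈ P, Complex.exp (2 * π * I * (((l : ℝ) * (p : ℝ) ^ 2 * a / q : ℝ) : ℂ))‖ ^ 2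
            : ℝ) : ℂ)
        = ∑ l ∈ Finset.Icc 1 q, ∑ p₁ ∈ P, ∑ p₂ ∈ P,
            Complex.exp (2 * (π : ℂ) * Complex.I *
              (((((p₁ : ℤ) ^ 2 - (p₂ : ℤ) ^ 2) * a : ℤ) : ℂ) / (q : ℂ))) ^ l :=
          Finset.sum_congr rfl step1
      _ = ∑ p₁ ∈ P, ∑ p₂ ∈ P, ∑ l ∈ Finset.Icc 1 q,
            Complex.exp (2 * (π : ℂ) * Complex.I *
              (((((p₁ : ℤ) ^ 2 - (p₂ : ℤ) ^ 2) * a : ℤ) : ℂ) / (q : ℂ))) ^ l := by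
          rw [Finset.sum_comm]
          exact Finset.sum_congr rfl fun p₁ _ => Finset.sum_comm
      _ = ∑ p₁ ∈ P, ∑ p₂ ∈ P,
            (if (q : ℤ) ∣ ((p₁ : ℤ) ^ 2 - (p₂ : ℤ) ^ 2) * a then (q : ℂ) else 0) :=
          Finset.sum_congr rfl fun p₁ _ => Finset.sum_congr rfl fun p₂ _ => aux_orth q hq0 _
      _ = ∑ pp ∈ P ×ˢ P,
            (if (q : ℤ) ∣ ((pp.1 : ℤ) ^ 2 - (pp.2 : ℤ) ^ 2) * a then (q : ℂ) else 0) :=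
          (Finset.sum_product' _ _ _).symm
      _ = ∑ pp ∈ P ×ˢ P,
            (if ((pp.2 : ℤ)) ^ 2 ≡ ((pp.1 : ℤ)) ^ 2 [ZMOD (q : ℤ)] then (q : ℂ) else 0) :=
          Finset.sum_congr rfl fun pp _ => if_congr (hiff pp) rfl rfl
      _ = ∑ _pp ∈ K, (q : ℂ) := (Finset.sum_filter _ _).symm
      _ = (q : ℂ) * (K.card : ℂ) := by rw [Finset.sum_const, nsmul_eq_mul, mul_comm]
  · have h2 := aux_count N q hq
    rw [← hP, ← hKdef] at h2
    have hK : ((K.card : ℝ)) ≤ (N : ℝ) * q.divisors.card := by exact_mod_cast h2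
    calc (q : ℝ) * K.card ≤ (q : ℝ) * ((N : ℝ) * q.divisors.card) :=
          mul_le_mul_of_nonneg_left hK (Nat.cast_nonneg q)
      _ = 1 * q * q.divisors.card * N := by ring
end
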